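/- arXiv:2201.12410 — 6 statements merged into one kernel-verified Lean document; each statement's English description precedes it below -/
import Mathlib

section
/- A digraph D with diachromatic number k is k-minimal (i.e., removing any arc decreases the diachromatic number below k) if and only if D has exactly k(k-1) arcs. -/
/-- A set of vertices is acyclic in a digraph if the induced subdigraph
contains no directed cycle (no vertex reaches itself through the set). -/
def Digraph.AcyclicOn {V : Type*} (D : Digraph V) (S : Set V) : Prop :=
  ¬ ∃ v, Relation.TransGen (fun a b => a ∈ S ∧ b ∈ S ∧ D.Adj a b) v v

/-- A `k`-coloring is acyclic if every color class induces an acyclic subdigraph. -/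
def Digraph.IsAcyclicColoring {V : Type*} {k : ℕ} (D : Digraph V) (c : V → Fin k) : Prop :=
  ∀ i : Fin k, D.AcyclicOn {v | c v = i}

/-- A `k`-coloring is complete if for every ordered pair of distinct colors
there is at least one arc from the first color to the second. -/
def Digraph.IsCompleteColoring {V : Type*} {k : ℕ} (D : Digraph V) (c : V → Fin k) : Prop :=
  ∀ i j : Fin k, i ≠ j → ∃ u v, D.Adj u v ∧ c u = i ∧ c v = j

/-- A coloring is proper if no arc joins two vertices of the same color. -/
def Digraph.IsProperColoring {V : Type*} {k : ℕ} (D : Digraph V) (c : V → Fin k) : Prop :=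
  ∀ u v, D.Adj u v → c u ≠ c v

/-- A coloring is harmonious if it is proper and for every ordered pair of
distinct colors there is at most one arc from the first color to the second. -/
def Digraph.IsHarmoniousColoring {V : Type*} {k : ℕ} (D : Digraph V) (c : V → Fin k) : Prop :=
  D.IsProperColoring c ∧
    ∀ u v u' v', D.Adj u v → D.Adj u' v' → c u = c u' → c v = c v' → c u ≠ c v →
      u = u' ∧ v = v'

/-- A coloring is balanced if all color classes have the same cardinality. -/
def IsBalancedColoring {V : Type*} {k : ℕ} (c : V → Fin k) : Prop :=
  ∀ i j : Fin k, Nat.card {v // c v = i} = Nat.card {v // c v = j}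

/-- The dichromatic number: the least `k` admitting an acyclic `k`-coloring. -/
noncomputable def Digraph.dichromaticNumber {V : Type*} (D : Digraph V) : ℕ :=
  sInf {k | ∃ c : V → Fin k, D.IsAcyclicColoring c}

/-- The diachromatic number: the greatest `k` admitting an acyclic complete `k`-coloring. -/
noncomputable def Digraph.diachromaticNumber {V : Type*} (D : Digraph V) : ℕ :=
  sSup {k | ∃ c : V → Fin k, D.IsAcyclicColoring c ∧ D.IsCompleteColoring c}

/-- The harmonious chromatic number: the least `k` admitting a harmonious `k`-coloring. -/
noncomputable def Digraph.harmoniousNumber {V : Type*} (D : Digraph V) : ℕ :=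
  sInf {k | ∃ c : V → Fin k, D.IsHarmoniousColoring c}

/-- The number of arcs (the size) of a digraph. -/
noncomputable def Digraph.arcCount {V : Type*} (D : Digraph V) : ℕ :=
  Nat.card {p : V × V // D.Adj p.1 p.2}

/-- Deletion of the arc `(u, v)` from a digraph. -/
def Digraph.deleteArc {V : Type*} (D : Digraph V) (u v : V) : Digraph V :=
  ⟨fun a b => D.Adj a b ∧ ¬(a = u ∧ b = v)⟩

/-- A digraph is `k`-minimal if its diachromatic number is `k` and deleting
any arc decreases the diachromatic number below `k`. -/
def Digraph.IsKMinimal {V : Type*} (D : Digraph V) (k : ℕ) : Prop :=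
  D.diachromaticNumber = k ∧
    ∀ u v, D.Adj u v → (D.deleteArc u v).diachromaticNumber < k

/-- The complete symmetric digraph on a vertex type. -/
def completeDigraph (V : Type*) : Digraph V := ⟨fun a b => a ≠ b⟩

/-- The directed cycle on `m` vertices. -/
def dirCycle (m : ℕ) : Digraph (ZMod m) := ⟨fun a b => b = a + 1⟩

/-- The lexicographic product of digraphs. -/
def lexProd {V W : Type*} (D : Digraph V) (H : Digraph W) : Digraph (V × W) :=
  ⟨fun x y => D.Adj x.1 y.1 ∨ (x.1 = y.1 ∧ H.Adj x.2 y.2)⟩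

/-- Vertex type of the `i`-fold iterated lexicographic product. -/
def iterType (V W : Type u) : ℕ → Type u
  | 0 => V
  | i + 1 => iterType V W i × W

/-- The iterated lexicographic product `D[H]^i` (with `D[H]^0 = D`). -/
def iterLex {V W : Type u} (D : Digraph V) (H : Digraph W) : (i : ℕ) → Digraph (iterType V W i)
  | 0 => D
  | i + 1 => lexProd (iterLex D H i) H

/-- The Zykov sum of the family `H` of mutually vertex-disjoint digraphs over `D`. -/
def zykovSum {V : Type*} {W : V → Type*} (D : Digraph V) (H : ∀ u, Digraph (W u)) :
    Digraph (Σ u, W u) :=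
  ⟨fun x y => D.Adj x.1 y.1 ∨ ∃ h : x.1 = y.1, (H y.1).Adj (h ▸ x.2) y.2⟩

lemma card_ne_pairs (k : ℕ) : Nat.card {p : Fin k × Fin k // p.1 ≠ p.2} = k * (k - 1) := by
  classical
  have e : {p : Fin k × Fin k // p.1 = p.2} ≃ Fin k :=
    { toFun := fun x => x.1.1
      invFun := fun i => ⟨(i, i), rfl⟩
      left_inv := by rintro ⟨⟨a, b⟩, h⟩; obtain rfl : a = b := h; rfl
      right_inv := fun i => rfl }
  have h1 : Fintype.card {p : Fin k × Fin k // p.1 = p.2} = k := by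
    rw [Fintype.card_congr e, Fintype.card_fin]
  have h2 : Fintype.card {p : Fin k × Fin k // ¬ p.1 = p.2} =
      Fintype.card (Fin k × Fin k) - Fintype.card {p : Fin k × Fin k // p.1 = p.2} :=
    Fintype.card_subtype_compl _
  rw [Nat.card_eq_fintype_card]
  show Fintype.card {p : Fin k × Fin k // ¬ p.1 = p.2} = _
  rw [h2, h1, Fintype.card_prod, Fintype.card_fin]
  cases k with
  | zero => simp
  | succ m => simp [Nat.succ_sub_one, Nat.mul_succ]

lemma dia_bdd {V : Type} [Fintype V] (D : Digraph V) :
    BddAbove {k | ∃ c : V → Fin k, D.IsAcyclicColoring c ∧ D.IsCompleteColoring c} := by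
  refine ⟨Fintype.card V + 1, ?_⟩
  rintro k ⟨c, -, hc⟩
  by_contra hlt
  push_neg at hlt
  have h2 : 1 < k := by omega
  have hsurj : Function.Surjective c := by
    intro i
    obtain ⟨j, hj⟩ := Fintype.exists_ne_of_one_lt_card (by simpa using h2) i
    obtain ⟨u, v, _, _, hv⟩ := hc j i hj
    exact ⟨v, hv⟩
  have := Fintype.card_le_of_surjective c hsurj
  simp only [Fintype.card_fin] at this
  omega

lemma arc_lb {V : Type} [Fintype V] (D : Digraph V) {k : ℕ} (c : V → Fin k)
    (hc : D.IsCompleteColoring c) : k * (k - 1) ≤ D.arcCount := by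
  classical
  have key : ∀ p : {p : Fin k × Fin k // p.1 ≠ p.2}, ∃ a : {p : V × V // D.Adj p.1 p.2},
      c a.1.1 = p.1.1 ∧ c a.1.2 = p.1.2 := by
    rintro ⟨⟨i, j⟩, hij⟩
    obtain ⟨u, v, huv, hu, hv⟩ := hc i j hij
    exact ⟨⟨(u, v), huv⟩, hu, hv⟩
  choose f hf1 hf2 using key
  have hinj : Function.Injective f := by
    intro p q hpq
    refine Subtype.ext (Prod.ext ?_ ?_)
    · rw [← hf1 p, ← hf1 q, hpq]
    · rw [← hf2 p, ← hf2 q, hpq]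
  calc k * (k - 1) = Nat.card {p : Fin k × Fin k // p.1 ≠ p.2} := (card_ne_pairs k).symm
    _ ≤ Nat.card {p : V × V // D.Adj p.1 p.2} := Nat.card_le_card_of_injective f hinj
    _ = D.arcCount := rfl

lemma arc_delete {V : Type} [Fintype V] (D : Digraph V) {u v : V} (h : D.Adj u v) :
    (D.deleteArc u v).arcCount < D.arcCount := by
  classical
  let f : {p : V × V // (D.deleteArc u v).Adj p.1 p.2} → {p : V × V // D.Adj p.1 p.2} :=
    fun a => ⟨a.1, a.2.1⟩
  have hinj : Function.Injective f := by
    intro a b hab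
    refine Subtype.ext ?_
    have h2 : (f a).1 = (f b).1 := congrArg Subtype.val hab
    exact h2
  have hns : (⟨(u, v), h⟩ : {p : V × V // D.Adj p.1 p.2}) ∉ Set.range f := by
    rintro ⟨a, ha⟩
    apply a.2.2
    have hv : a.1 = (u, v) := congrArg Subtype.val ha
    exact ⟨by rw [hv], by rw [hv]⟩
  rw [Digraph.arcCount, Digraph.arcCount, Nat.card_eq_fintype_card, Nat.card_eq_fintype_card]
  exact Fintype.card_lt_of_injective_of_notMem f hinj hns

lemma acyclic_delete {V : Type} {k : ℕ} (D : Digraph V) (u v : V) (c : V → Fin k)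
    (hc : D.IsAcyclicColoring c) : (D.deleteArc u v).IsAcyclicColoring c := by
  intro i hcyc
  apply hc i
  obtain ⟨w, hw⟩ := hcyc
  exact ⟨w, Relation.TransGen.mono (fun a b (hab : _ ∧ _ ∧ (D.deleteArc u v).Adj a b) => (⟨hab.1, hab.2.1, hab.2.2.1⟩ : _ ∧ _ ∧ D.Adj a b)) w w hw⟩

/-- a digraph with diachromatic number `k` is `k`-minimal iff it has
exactly `k(k-1)` arcs. -/
theorem stmt1 {V : Type} [Fintype V] (D : Digraph V) (k : ℕ)
    (h : D.diachromaticNumber = k) :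
    D.IsKMinimal k ↔ D.arcCount = k * (k - 1) := by
  classical
  constructor
  · rintro ⟨-, hmin⟩
    have noarc_of_zero : k = 0 → D.arcCount = 0 := by
      intro hk0
      by_contra hne
      have : Nonempty {p : V × V // D.Adj p.1 p.2} := by
        rw [Digraph.arcCount] at hne
        obtain ⟨h1, -⟩ := not_or.mp (Nat.card_eq_zero.not.mp hne)
        exact not_isEmpty_iff.mp h1
      obtain ⟨⟨⟨a, b⟩, hab⟩⟩ := this
      exact absurd (hmin a b hab) (by omega)
    rcases Nat.eq_zero_or_pos k with hk0 | hkpos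
    · rw [noarc_of_zero hk0, hk0]
    · have hne : {k | ∃ c : V → Fin k, D.IsAcyclicColoring c ∧ D.IsCompleteColoring c}.Nonempty := by
        by_contra hemp
        rw [Set.not_nonempty_iff_eq_empty] at hemp
        rw [Digraph.diachromaticNumber, hemp] at h
        simp at h
        omega
      have hmem := Nat.sSup_mem hne (dia_bdd D)
      rw [← Digraph.diachromaticNumber, h] at hmem
      obtain ⟨c, hac, hcc⟩ := hmem
      have hle := arc_lb D c hcc
      refine le_antisymm ?_ hle
      by_contra hgt
      push_neg at hgt
      -- find an arc a such that c is still complete after deleting a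
      have key : ∃ a : {p : V × V // D.Adj p.1 p.2},
          ∀ i j : Fin k, i ≠ j → ∃ e : {p : V × V // D.Adj p.1 p.2},
            e ≠ a ∧ c e.1.1 = i ∧ c e.1.2 = j := by
        by_cases hmono : ∃ a : {p : V × V // D.Adj p.1 p.2}, c a.1.1 = c a.1.2
        · obtain ⟨a, ha⟩ := hmono
          refine ⟨a, fun i j hij => ?_⟩
          obtain ⟨x, y, hxy, hx, hy⟩ := hcc i j hij
          refine ⟨⟨(x, y), hxy⟩, fun heq => ?_, hx, hy⟩
          apply hij
          have h1 : x = a.1.1 := congrArg (fun z => z.1.1) heq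
          have h2 : y = a.1.2 := congrArg (fun z => z.1.2) heq
          rw [← hx, ← hy, h1, h2, ha]
        · push_neg at hmono
          let g : {p : V × V // D.Adj p.1 p.2} → {p : Fin k × Fin k // p.1 ≠ p.2} :=
            fun a => ⟨(c a.1.1, c a.1.2), hmono a⟩
          have hcard : Fintype.card {p : Fin k × Fin k // p.1 ≠ p.2} <
              Fintype.card {p : V × V // D.Adj p.1 p.2} := by
            have e1 : Nat.card {p : Fin k × Fin k // p.1 ≠ p.2} = k * (k - 1) := card_ne_pairs k
            rw [Nat.card_eq_fintype_card] at e1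
            rw [e1]
            rw [Digraph.arcCount, Nat.card_eq_fintype_card] at hgt
            exact hgt
          obtain ⟨a, b, hab, hgab⟩ := Fintype.exists_ne_map_eq_of_card_lt g hcard
          refine ⟨a, fun i j hij => ?_⟩
          obtain ⟨x, y, hxy, hx, hy⟩ := hcc i j hij
          by_cases hea : (⟨(x, y), hxy⟩ : {p : V × V // D.Adj p.1 p.2}) = a
          · have h1 : c b.1.1 = c a.1.1 := congrArg (fun z => z.1.1) hgab.symm
            have h2 : c b.1.2 = c a.1.2 := congrArg (fun z => z.1.2) hgab.symm
            have h3 : c a.1.1 = i := by rw [← hea] at h1 ⊢; exact hx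
            have h4 : c a.1.2 = j := by rw [← hea] at h2 ⊢; exact hy
            exact ⟨b, Ne.symm hab, by rw [h1, h3], by rw [h2, h4]⟩
          · exact ⟨⟨(x, y), hxy⟩, hea, hx, hy⟩
      obtain ⟨a, hkey⟩ := key
      set u := a.1.1
      set v := a.1.2
      have hk_mem : k ∈ {k | ∃ c : V → Fin k, (D.deleteArc u v).IsAcyclicColoring c ∧
          (D.deleteArc u v).IsCompleteColoring c} := by
        refine ⟨c, acyclic_delete D u v c hac, fun i j hij => ?_⟩
        obtain ⟨e, hea, hx, hy⟩ := hkey i j hij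
        refine ⟨e.1.1, e.1.2, ⟨e.2, fun hh => hea ?_⟩, hx, hy⟩
        apply Subtype.ext
        exact Prod.ext hh.1 hh.2
      have hge : k ≤ (D.deleteArc u v).diachromaticNumber :=
        le_csSup (dia_bdd _) hk_mem
      have := hmin u v a.2
      omega
  · intro harc
    refine ⟨h, fun u v huv => ?_⟩
    have hpos : 0 < D.arcCount := by
      rw [Digraph.arcCount]
      have : Nonempty {p : V × V // D.Adj p.1 p.2} := ⟨⟨(u, v), huv⟩⟩
      exact Nat.card_pos
    have hk2 : 2 ≤ k := by
      rcases Nat.lt_or_ge k 2 with hk | hk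
      · interval_cases k <;> simp_all
      · exact hk
    by_contra hge
    push_neg at hge
    set D' := D.deleteArc u v with hD'
    have hne' : {k | ∃ c : V → Fin k, D'.IsAcyclicColoring c ∧ D'.IsCompleteColoring c}.Nonempty := by
      by_contra hemp
      rw [Set.not_nonempty_iff_eq_empty] at hemp
      have : D'.diachromaticNumber = 0 := by
        rw [Digraph.diachromaticNumber, hemp]; simp
      omega
    have hmem := Nat.sSup_mem hne' (dia_bdd D')
    rw [← Digraph.diachromaticNumber] at hmem
    obtain ⟨c', -, hcc'⟩ := hmem
    have h1 := arc_lb D' c' hcc'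
    have h2 : k * (k - 1) ≤ D'.diachromaticNumber * (D'.diachromaticNumber - 1) :=
      Nat.mul_le_mul hge (by omega)
    have h3 := arc_delete D huv
    rw [← hD'] at h3
    omega
end

section
/- Let m, n ≥ 3. For any complete k-coloring of the lexicographic product C⃗_m[C⃗_n], one has k ≤ max over natural numbers x of min{⌊mn/x⌋, x(n+1)+1}. -/
/-- for `m, n ≥ 3`, any complete `k`-coloring of `C⃗_m[C⃗_n]` satisfies
`k ≤ max_x min{⌊mn/x⌋, x(n+1)+1}`. -/
theorem stmt7 (m n : ℕ) (hm : 3 ≤ m) (hn : 3 ≤ n) (k : ℕ)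
    (c : ZMod m × ZMod n → Fin k)
    (hc : (lexProd (dirCycle m) (dirCycle n)).IsCompleteColoring c) :
    k ≤ sSup {y : ℕ | ∃ x : ℕ, y = min (m * n / x) (x * (n + 1) + 1)} := by

  classical
  haveI : NeZero m := ⟨by omega⟩
  haveI : NeZero n := ⟨by omega⟩
  have hbdd : BddAbove {y : ℕ | ∃ x : ℕ, y = min (m * n / x) (x * (n + 1) + 1)} := by
    refine ⟨m * n, ?_⟩
    rintro y ⟨x, rfl⟩
    rcases Nat.eq_zero_or_pos x with rfl | hx
    · simp
    · exact le_trans (min_le_left _ _) (Nat.div_le_self _ _)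
  rcases Nat.eq_zero_or_pos k with rfl | hk
  · exact Nat.zero_le _
  set D := lexProd (dirCycle m) (dirCycle n) with hD
  let C : Fin k → Finset (ZMod m × ZMod n) := fun i => Finset.univ.filter (fun v => c v = i)
  have hne : (Finset.univ : Finset (Fin k)).Nonempty := ⟨⟨0, hk⟩, Finset.mem_univ _⟩
  obtain ⟨i₀, -, hmin⟩ := Finset.exists_min_image Finset.univ (fun i => (C i).card) hne
  set x := (C i₀).card with hxdef
  -- x > 0
  have hx0 : 0 < x := by
    rcases lt_or_ge 1 k with hk2 | hk1
    · obtain ⟨j, hj⟩ := Fintype.exists_ne_of_one_lt_card (by simpa using hk2) i₀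
      obtain ⟨u, v, hadj, hu, hv⟩ := hc i₀ j (Ne.symm hj)
      refine Finset.card_pos.mpr ⟨u, ?_⟩
      simp [C, hu]
    · have hk1' : k = 1 := by omega
      subst hk1'
      have : ((0 : ZMod m), (0 : ZMod n)) ∈ C i₀ := by
        simp only [C, Finset.mem_filter, Finset.mem_univ, true_and]
        exact Subsingleton.elim _ _
      exact Finset.card_pos.mpr ⟨_, this⟩
  -- (a) k * x ≤ m * n
  have hsum : ∑ i : Fin k, (C i).card = m * n := by
    have h1 : (Finset.univ : Finset (ZMod m × ZMod n)).card
        = ∑ i : Fin k, (C i).card :=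
      Finset.card_eq_sum_card_fiberwise (fun v _ => Finset.mem_univ (c v))
    rw [← h1, Finset.card_univ, Fintype.card_prod, ZMod.card, ZMod.card]
  have ha : k ≤ m * n / x := by
    rw [Nat.le_div_iff_mul_le hx0]
    calc k * x = ∑ _i : Fin k, x := by simp [mul_comm]
    _ ≤ ∑ i : Fin k, (C i).card :=
        Finset.sum_le_sum (fun i _ => hmin i (Finset.mem_univ i))
    _ = m * n := hsum
  -- (b) k ≤ x * (n+1) + 1
  let N : Finset (ZMod m × ZMod n) :=
    (C i₀).biUnion (fun u => Finset.univ.filter (fun v => D.Adj u v))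
  have hdeg : ∀ u : ZMod m × ZMod n,
      (Finset.univ.filter (fun v => D.Adj u v)).card ≤ n + 1 := by
    rintro ⟨a, b⟩
    have hsub : Finset.univ.filter (fun v => D.Adj (a, b) v)
        ⊆ insert (a, b + 1) (({a + 1} : Finset (ZMod m)) ×ˢ Finset.univ) := by
      rintro ⟨a', b'⟩ hv
      simp only [hD, lexProd, dirCycle, Finset.mem_filter, Finset.mem_univ, true_and] at hv
      rcases hv with h | ⟨h1, h2⟩
      · apply Finset.mem_insert_of_mem
        simp [h]
      · subst h1; subst h2
        exact Finset.mem_insert_self _ _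
    calc (Finset.univ.filter (fun v => D.Adj (a, b) v)).card
        ≤ (insert (a, b + 1) (({a + 1} : Finset (ZMod m)) ×ˢ Finset.univ)).card :=
          Finset.card_le_card hsub
      _ ≤ (({a + 1} : Finset (ZMod m)) ×ˢ (Finset.univ : Finset (ZMod n))).card + 1 :=
          Finset.card_insert_le _ _
      _ = n + 1 := by simp [Finset.card_product, ZMod.card]
  have hNcard : N.card ≤ x * (n + 1) := by
    calc N.card ≤ ∑ u ∈ C i₀, (Finset.univ.filter (fun v => D.Adj u v)).card :=
          Finset.card_biUnion_le
      _ ≤ ∑ _u ∈ C i₀, (n + 1) := Finset.sum_le_sum (fun u _ => hdeg u)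
      _ = x * (n + 1) := by simp [hxdef]
  have key : ∀ j : Fin k, j ≠ i₀ → ∃ v, v ∈ N ∧ c v = j := by
    intro j hj
    obtain ⟨u, v, hadj, hu, hv⟩ := hc i₀ j (Ne.symm hj)
    refine ⟨v, Finset.mem_biUnion.mpr ⟨u, by simp [C, hu], by simp [hadj]⟩, hv⟩
  choose f hfN hfc using key
  have hinj : (Finset.univ.filter (fun j : Fin k => j ≠ i₀)).card ≤ N.card := by
    refine Finset.card_le_card_of_injOn
      (fun j => if h : j ≠ i₀ then f j h else (0, 0)) ?_ ?_
    · intro j hj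
      simp only [Finset.coe_filter, Set.mem_setOf_eq, Finset.mem_filter, Finset.mem_univ, true_and] at hj
      simpa [hj] using hfN j hj
    · intro j₁ h₁ j₂ h₂ heq
      simp only [Finset.coe_filter, Set.mem_setOf_eq, Finset.mem_univ, true_and] at h₁ h₂
      have e1 : c (if h : j₁ ≠ i₀ then f j₁ h else (0, 0)) = j₁ := by
        simp [h₁, hfc]
      have e2 : c (if h : j₂ ≠ i₀ then f j₂ h else (0, 0)) = j₂ := by
        simp [h₂, hfc]
      rw [← e1, ← e2]
      exact congrArg c heq
  have hcardfil : (Finset.univ.filter (fun j : Fin k => j ≠ i₀)).card = k - 1 := by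
    rw [Finset.filter_ne', Finset.card_erase_of_mem (Finset.mem_univ _), Finset.card_univ,
      Fintype.card_fin]
  have hb : k ≤ x * (n + 1) + 1 := by
    have := hinj.trans hNcard
    omega
  exact le_trans (le_min ha hb) (le_csSup hbdd ⟨x, rfl⟩)
end

section
/- For all n ≥ 3 and 1 ≤ t ≤ n, the diachromatic number of C⃗_{n²−n+t}[C⃗_n] is at most n². -/
/-- for `n ≥ 3` and `1 ≤ t ≤ n`, `dac(C⃗_{n²−n+t}[C⃗_n]) ≤ n²`. -/
theorem stmt8 (n t : ℕ) (hn : 3 ≤ n) (ht1 : 1 ≤ t) (ht2 : t ≤ n) :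
    (lexProd (dirCycle (n ^ 2 - n + t)) (dirCycle n)).diachromaticNumber ≤ n ^ 2 := by
  classical
  have hnn : n ≤ n ^ 2 := by nlinarith
  have hm : n ^ 2 - n + t ≠ 0 := by omega
  haveI : NeZero (n ^ 2 - n + t) := ⟨hm⟩
  haveI : NeZero n := ⟨by omega⟩
  set m := n ^ 2 - n + t with hmdef
  set D := lexProd (dirCycle m) (dirCycle n) with hD
  have hne : ∀ a : ZMod m, a ≠ a + 1 := by
    haveI : Fact (1 < m) := by
      constructor
      have h2 : 2 * n ≤ n ^ 2 := by nlinarith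
      omega
    intro a he
    have h0 : a + 0 = a + 1 := by rw [add_zero]; exact he
    exact zero_ne_one (add_left_cancel h0)
  apply csSup_le'
  rintro k ⟨c, -, hcomp⟩
  by_contra hk
  push_neg at hk
  have hk1 : 1 ≤ k := by nlinarith
  -- class sizes
  set f : Fin k → ℕ := fun i => (Finset.univ.filter fun v : ZMod m × ZMod n => c v = i).card
    with hf
  obtain ⟨i₀, -, hmin⟩ := Finset.exists_min_image Finset.univ f
    ⟨⟨0, hk1⟩, Finset.mem_univ _⟩
  set x := f i₀ with hx
  -- Bound 1 : k * x ≤ m * n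
  have hsum : ∑ i : Fin k, f i = m * n := by
    have := Finset.card_eq_sum_card_fiberwise
      (f := c) (s := (Finset.univ : Finset (ZMod m × ZMod n))) (t := Finset.univ)
      (fun v _ => Finset.mem_univ _)
    rw [Finset.card_univ] at this
    have hcard : Fintype.card (ZMod m × ZMod n) = m * n := by
      simp [ZMod.card]
    rw [hcard] at this
    exact this.symm
  have hb1 : k * x ≤ m * n := by
    calc k * x = ∑ _i : Fin k, x := by simp [Finset.sum_const, mul_comm]
    _ ≤ ∑ i : Fin k, f i := Finset.sum_le_sum fun i _ => hmin i (Finset.mem_univ i)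
    _ = m * n := hsum
  -- Bound 2 : k ≤ x * (n + 1) + 1
  set A : Finset ((ZMod m × ZMod n) × (ZMod m × ZMod n)) :=
    Finset.univ.filter (fun p => D.Adj p.1 p.2 ∧ c p.1 = i₀) with hA
  have hAcard : A.card ≤ x * (n + 1) := by
    rw [Finset.card_eq_sum_card_fiberwise
      (f := Prod.fst) (s := A) (t := Finset.univ.filter fun v => c v = i₀)
      (by intro p hp
          exact Finset.mem_filter.mpr ⟨Finset.mem_univ _, (Finset.mem_filter.mp hp).2.2⟩)]
    have hfib : ∀ u ∈ Finset.univ.filter fun v : ZMod m × ZMod n => c v = i₀,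
        (A.filter fun p => p.1 = u).card ≤ n + 1 := by
      intro u _
      have hinj : ∀ p ∈ A.filter fun p => p.1 = u,
          (if p.2.1 = u.1 then (none : Option (ZMod n)) else some p.2.2) ∈
            (Finset.univ : Finset (Option (ZMod n))) := fun _ _ => Finset.mem_univ _
      calc (A.filter fun p => p.1 = u).card
          ≤ (Finset.univ : Finset (Option (ZMod n))).card := by
            apply Finset.card_le_card_of_injOn
              (fun p => if p.2.1 = u.1 then (none : Option (ZMod n)) else some p.2.2)
              (by intro p hp; exact hinj p hp)
            intro p hp q hq hpq
            simp only [hA, Finset.mem_coe, Finset.mem_filter, Finset.mem_univ, true_and] at hp hq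
            obtain ⟨⟨hadj, -⟩, hp1⟩ := hp
            obtain ⟨⟨qadj, -⟩, hq1⟩ := hq
            have hadj' : p.2.1 = p.1.1 + 1 ∨ (p.1.1 = p.2.1 ∧ p.2.2 = p.1.2 + 1) := hadj
            have qadj' : q.2.1 = q.1.1 + 1 ∨ (q.1.1 = q.2.1 ∧ q.2.2 = q.1.2 + 1) := qadj
            rw [hp1] at hadj'; rw [hq1] at qadj'
            have hpq2 : p.2 = q.2 := by
              by_cases h1 : p.2.1 = u.1
              · by_cases h2 : q.2.1 = u.1
                · -- both in same copy: second coord determined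
                  have e1 : p.2.2 = u.2 + 1 := by
                    rcases hadj' with h | h
                    · exact absurd (h1.symm.trans h) (hne u.1)
                    · exact h.2
                  have e2 : q.2.2 = u.2 + 1 := by
                    rcases qadj' with h | h
                    · exact absurd (h2.symm.trans h) (hne u.1)
                    · exact h.2
                  exact Prod.ext (h1.trans h2.symm) (e1.trans e2.symm)
                · simp [h1, h2] at hpq
              · by_cases h2 : q.2.1 = u.1
                · simp [h1, h2] at hpq
                · simp [h1, h2] at hpq
                  have e1 : p.2.1 = u.1 + 1 := by
                    rcases hadj' with h | h
                    · exact h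
                    · exact absurd h.1.symm h1
                  have e2 : q.2.1 = u.1 + 1 := by
                    rcases qadj' with h | h
                    · exact h
                    · exact absurd h.1.symm h2
                  exact Prod.ext (e1.trans e2.symm) hpq
            exact Prod.ext (hp1.trans hq1.symm) hpq2
        _ = n + 1 := by simp [ZMod.card]
    calc ∑ u ∈ Finset.univ.filter (fun v : ZMod m × ZMod n => c v = i₀),
          (A.filter fun p => p.1 = u).card
        ≤ ∑ _u ∈ Finset.univ.filter (fun v : ZMod m × ZMod n => c v = i₀), (n + 1) :=
          Finset.sum_le_sum hfib
      _ = x * (n + 1) := by rw [Finset.sum_const, smul_eq_mul]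
  have hb2 : k - 1 ≤ x * (n + 1) := by
    have hB : (Finset.univ.erase i₀).card = k - 1 := by
      rw [Finset.card_erase_of_mem (Finset.mem_univ _), Finset.card_univ, Fintype.card_fin]
    set F : Fin k → (ZMod m × ZMod n) × (ZMod m × ZMod n) := fun j =>
      if h : i₀ ≠ j then
        ((hcomp i₀ j h).choose, (hcomp i₀ j h).choose_spec.choose)
      else ((0, 0), (0, 0)) with hF
    have hFspec : ∀ j, i₀ ≠ j → D.Adj (F j).1 (F j).2 ∧ c (F j).1 = i₀ ∧ c (F j).2 = j := by
      intro j h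
      have := (hcomp i₀ j h).choose_spec.choose_spec
      simp only [hF, dif_pos h]
      exact this
    have hle : (Finset.univ.erase i₀).card ≤ A.card := by
      apply Finset.card_le_card_of_injOn F
      · intro j hj
        have hj' : i₀ ≠ j := (Finset.ne_of_mem_erase hj).symm
        obtain ⟨h1, h2, -⟩ := hFspec j hj'
        exact Finset.mem_filter.mpr ⟨Finset.mem_univ _, h1, h2⟩
      · intro j hj j' hj' heq
        have h1 : i₀ ≠ j := (Finset.ne_of_mem_erase (Finset.mem_coe.mp hj)).symm
        have h2 : i₀ ≠ j' := (Finset.ne_of_mem_erase (Finset.mem_coe.mp hj')).symm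
        have e1 := (hFspec j h1).2.2
        have e2 := (hFspec j' h2).2.2
        rw [heq] at e1
        exact e1.symm.trans e2
    omega
  -- finish
  rcases le_or_gt n x with hxn | hxn
  · have : k * n ≤ m * n := le_trans (Nat.mul_le_mul_left k hxn) hb1
    have hkm : k ≤ m := Nat.le_of_mul_le_mul_right this (by omega)
    omega
  · -- x ≤ n - 1, so k ≤ x*(n+1)+1 ≤ n^2
    have hxle : x + 1 ≤ n := hxn
    have : x * (n + 1) + 1 ≤ n ^ 2 := by nlinarith
    omega
end

section
/- Let m, n ≥ 3. For any harmonious k-coloring of the lexicographic product C⃗_m[C⃗_n], one has k ≥ min over natural numbers x of max{⌈mn/x⌉, x(n+1)+1}. -/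
/-- for `m, n ≥ 3`, any harmonious `k`-coloring of `C⃗_m[C⃗_n]` satisfies
`k ≥ min_x max{⌈mn/x⌉, x(n+1)+1}` (over positive `x`). -/
theorem stmt10 (m n : ℕ) (hm : 3 ≤ m) (hn : 3 ≤ n) (k : ℕ)
    (c : ZMod m × ZMod n → Fin k)
    (hc : (lexProd (dirCycle m) (dirCycle n)).IsHarmoniousColoring c) :
    sInf {y : ℕ | ∃ x : ℕ, 1 ≤ x ∧
      y = max (⌈((m * n : ℕ) : ℚ) / (x : ℚ)⌉₊) (x * (n + 1) + 1)} ≤ k := by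
  haveI : NeZero m := ⟨by omega⟩
  haveI : NeZero n := ⟨by omega⟩
  haveI : Fact (1 < m) := ⟨by omega⟩
  set D := lexProd (dirCycle m) (dirCycle n) with hD
  have hk : 0 < k := (c (0, 0)).pos
  -- x : the size of the largest color class
  set x : ℕ := Finset.univ.sup
    (fun i : Fin k => (Finset.univ.filter (fun v => c v = i)).card) with hxdef
  -- total count
  have hcardV : Fintype.card (ZMod m × ZMod n) = m * n := by
    simp [ZMod.card]
  have hsum : ∑ i : Fin k, (Finset.univ.filter (fun v => c v = i)).card = m * n := by
    rw [← hcardV, ← Finset.card_univ]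
    exact (Finset.card_eq_sum_card_fiberwise (fun v _ => Finset.mem_univ (c v))).symm
  have hmn_le : m * n ≤ k * x := by
    calc m * n = ∑ i : Fin k, (Finset.univ.filter (fun v => c v = i)).card := hsum.symm
    _ ≤ Finset.univ.card • x :=
        Finset.sum_le_card_nsmul _ _ _ (fun i _ => by
          rw [hxdef]
          exact Finset.le_sup (f := fun i : Fin k => (Finset.univ.filter (fun v => c v = i)).card) (Finset.mem_univ i))
    _ = k * x := by simp [smul_eq_mul]
  have hx1 : 1 ≤ x := by
    have h0 : (0, 0) ∈ Finset.univ.filter (fun v : ZMod m × ZMod n => c v = c (0, 0)) := by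
      simp
    have h1 := Finset.card_pos.mpr ⟨_, h0⟩
    have h2 : (Finset.univ.filter (fun v : ZMod m × ZMod n => c v = c (0, 0))).card ≤ x := by
      rw [hxdef]
      exact Finset.le_sup (f := fun i : Fin k => (Finset.univ.filter (fun v => c v = i)).card) (Finset.mem_univ (c (0, 0)))
    omega
  -- pick a color class of maximal size
  haveI : Nonempty (Fin k) := ⟨⟨0, hk⟩⟩
  obtain ⟨i, -, hSi⟩ := Finset.exists_mem_eq_sup Finset.univ
    (Finset.univ_nonempty (α := Fin k))
    (fun i : Fin k => (Finset.univ.filter (fun v => c v = i)).card)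
  set S := Finset.univ.filter (fun v => c v = i) with hSdef
  -- the out-neighbor map
  set target : ZMod m × ZMod n → Fin (n + 1) → ZMod m × ZMod n :=
    fun v j => if ((j : ℕ) < n) then (v.1 + 1, ((j : ℕ) : ZMod n)) else (v.1, v.2 + 1)
    with htarget
  have hadj : ∀ v j, D.Adj v (target v j) := by
    intro v j
    by_cases h : (j : ℕ) < n
    · simp only [htarget, if_pos h]
      exact Or.inl rfl
    · simp only [htarget, if_neg h]
      exact Or.inr ⟨rfl, rfl⟩
  have hone : (1 : ZMod m) ≠ 0 := one_ne_zero
  have htinj : ∀ v, Function.Injective (target v) := by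
    intro v j j' h
    by_cases hj : (j : ℕ) < n <;> by_cases hj' : (j' : ℕ) < n <;>
      simp only [htarget, if_pos, if_neg, hj, hj', if_true, if_false] at h
    · have h2 : (((j : ℕ) : ZMod n)) = (((j' : ℕ) : ZMod n)) := congrArg Prod.snd h
      have := congrArg ZMod.val h2
      rw [ZMod.val_cast_of_lt hj, ZMod.val_cast_of_lt hj'] at this
      exact Fin.ext this
    · exact absurd (congrArg Prod.fst h) (by
        intro hfst
        exact hone (by linear_combination hfst))
    · exact absurd (congrArg Prod.fst h) (by
        intro hfst
        exact hone (by linear_combination -hfst))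
    · omega
  have hti : ∀ v ∈ S, ∀ j, c (target v j) ≠ i := by
    intro v hv j
    have hvc : c v = i := by simpa [hSdef] using hv
    have := hc.1 v (target v j) (hadj v j)
    rw [hvc] at this
    exact fun h => this h.symm
  -- the injection into colors distinct from i
  set g : {v // v ∈ S} × Fin (n + 1) → {j : Fin k // j ≠ i} :=
    fun p => ⟨c (target p.1.1 p.2), hti p.1.1 p.1.2 p.2⟩ with hg
  have hginj : Function.Injective g := by
    rintro ⟨⟨v, hv⟩, j⟩ ⟨⟨v', hv'⟩, j'⟩ hgeq
    have hcv : c v = i := by simpa [hSdef] using hv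
    have hcv' : c v' = i := by simpa [hSdef] using hv'
    have hct : c (target v j) = c (target v' j') := congrArg Subtype.val hgeq
    have hne : c v ≠ c (target v j) := hc.1 v (target v j) (hadj v j)
    obtain ⟨he1, he2⟩ := hc.2 v (target v j) v' (target v' j')
      (hadj v j) (hadj v' j') (hcv.trans hcv'.symm) hct hne
    subst he1
    have := htinj v he2
    subst this
    rfl
  have hScard : S.card = x := by rw [hxdef, hSi]
  have hcard1 : Fintype.card ({v // v ∈ S} × Fin (n + 1)) = x * (n + 1) := by
    rw [Fintype.card_prod, Fintype.card_coe, Fintype.card_fin, hScard]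
  have hcard2 : Fintype.card {j : Fin k // j ≠ i} = k - 1 := by
    simp [Fintype.card_subtype_compl]
  have hxk : x * (n + 1) + 1 ≤ k := by
    have := Fintype.card_le_of_injective g hginj
    rw [hcard1, hcard2] at this
    omega
  have hceil : (⌈((m * n : ℕ) : ℚ) / (x : ℚ)⌉₊) ≤ k := by
    rw [Nat.ceil_le, div_le_iff₀ (by exact_mod_cast hx1)]
    exact_mod_cast hmn_le
  have hmem : max (⌈((m * n : ℕ) : ℚ) / (x : ℚ)⌉₊) (x * (n + 1) + 1) ∈
      {y : ℕ | ∃ x : ℕ, 1 ≤ x ∧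
        y = max (⌈((m * n : ℕ) : ℚ) / (x : ℚ)⌉₊) (x * (n + 1) + 1)} :=
    ⟨x, hx1, rfl⟩
  exact le_trans (Nat.sInf_le hmem) (max_le hceil hxk)
end

section
/- For all n ≥ 3 and 1 ≤ t < n, the harmonious chromatic number of C⃗_{n²−n−t}[C⃗_n] is at least n². -/
private lemma stmt11_key (m n k : ℕ) (hm : 2 ≤ m) (hn : 3 ≤ n)
    (c : ZMod m × ZMod n → Fin k)
    (hc : (lexProd (dirCycle m) (dirCycle n)).IsHarmoniousColoring c) :
    ∃ x : ℕ, x * (n + 1) + 1 ≤ k ∧ m * n ≤ k * x := by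
  haveI : NeZero m := ⟨by omega⟩
  haveI : NeZero n := ⟨by omega⟩
  haveI : Fact (1 < m) := ⟨by omega⟩
  have hk : 0 < k := Fin.pos_iff_nonempty.mpr ⟨c (0, 0)⟩
  set D := lexProd (dirCycle m) (dirCycle n) with hD
  set tgt : ZMod m × ZMod n → (ZMod n ⊕ Unit) → ZMod m × ZMod n :=
    fun v s => Sum.elim (fun j => (v.1 + 1, j)) (fun _ => (v.1, v.2 + 1)) s with htgt
  have hadj : ∀ v s, D.Adj v (tgt v s) := by
    rintro v (j | u)
    · exact Or.inl rfl
    · exact Or.inr ⟨rfl, rfl⟩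
  have step1 : ∀ i : Fin k,
      Fintype.card {v // c v = i} * (n + 1) + 1 ≤ k := by
    intro i
    set F : {v // c v = i} × (ZMod n ⊕ Unit) → {j : Fin k // j ≠ i} :=
      fun p => ⟨c (tgt p.1.1 p.2), by
        have := hc.1 p.1.1 (tgt p.1.1 p.2) (hadj _ _)
        rw [p.1.2] at this
        exact fun h => this h.symm⟩ with hF
    have hFinj : Function.Injective F := by
      rintro ⟨⟨v, hv⟩, s⟩ ⟨⟨v', hv'⟩, s'⟩ h
      have hcc : c (tgt v s) = c (tgt v' s') := congrArg Subtype.val h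
      have hne : c v ≠ c (tgt v s) := hc.1 v (tgt v s) (hadj _ _)
      obtain ⟨hvv, htt⟩ := hc.2 v (tgt v s) v' (tgt v' s')
        (hadj _ _) (hadj _ _) (hv.trans hv'.symm) hcc hne
      subst hvv
      have hss : s = s' := by
        rcases s with j | u <;> rcases s' with j' | u'
        · simp only [htgt, Sum.elim_inl, Prod.mk.injEq] at htt
          exact congrArg Sum.inl htt.2
        · exfalso
          simp only [htgt, Sum.elim_inl, Sum.elim_inr, Prod.mk.injEq] at htt
          have : (1 : ZMod m) = 0 := by
            have h1 : v.1 + 1 = v.1 + 0 := by rw [add_zero]; exact htt.1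
            exact add_left_cancel h1
          exact one_ne_zero this
        · exfalso
          simp only [htgt, Sum.elim_inl, Sum.elim_inr, Prod.mk.injEq] at htt
          have : (1 : ZMod m) = 0 := by
            have h1 : v.1 + 0 = v.1 + 1 := by rw [add_zero]; exact htt.1
            exact (add_left_cancel h1).symm
          exact one_ne_zero this
        · simp
      subst hss; rfl
    have hcard := Fintype.card_le_of_injective F hFinj
    have h1 : Fintype.card {j : Fin k // j ≠ i} = k - 1 := by
      simp [Fintype.card_subtype_compl]
    rw [Fintype.card_prod, h1] at hcard
    simp only [Fintype.card_sum, ZMod.card, Fintype.card_unit] at hcard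
    omega
  obtain ⟨i0, -, hmax⟩ := Finset.exists_max_image Finset.univ
    (fun i : Fin k => Fintype.card {v // c v = i}) ⟨⟨0, hk⟩, Finset.mem_univ _⟩
  refine ⟨Fintype.card {v // c v = i0}, step1 i0, ?_⟩
  have hsum : Fintype.card (ZMod m × ZMod n)
      = ∑ i : Fin k, Fintype.card {v // c v = i} := by
    classical
    simp_rw [Fintype.card_subtype]
    rw [Fintype.card, Finset.card_eq_sum_card_fiberwise (f := c)
      (t := Finset.univ) (fun x _ => Finset.mem_univ _)]
  have hle : ∑ i : Fin k, Fintype.card {v // c v = i}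
      ≤ k * Fintype.card {v // c v = i0} := by
    calc ∑ i : Fin k, Fintype.card {v // c v = i}
        ≤ ∑ _i : Fin k, Fintype.card {v // c v = i0} :=
          Finset.sum_le_sum (fun i _ => hmax i (Finset.mem_univ i))
      _ = k * Fintype.card {v // c v = i0} := by simp [Finset.sum_const, mul_comm]
  have hcV : Fintype.card (ZMod m × ZMod n) = m * n := by
    simp [ZMod.card]
  omega

private lemma stmt11_exists_harm (m n : ℕ) (hm : 2 ≤ m) (hn : 2 ≤ n) :
    {k | ∃ c : ZMod m × ZMod n → Fin k,
      (lexProd (dirCycle m) (dirCycle n)).IsHarmoniousColoring c}.Nonempty := by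
  haveI : NeZero m := ⟨by omega⟩
  haveI : NeZero n := ⟨by omega⟩
  haveI : Fact (1 < m) := ⟨by omega⟩
  haveI : Fact (1 < n) := ⟨by omega⟩
  have hcV : Fintype.card (ZMod m × ZMod n) = m * n := by simp [ZMod.card]
  refine ⟨m * n, ⟨fun v => (Fintype.equivFinOfCardEq hcV) v, ?_, ?_⟩⟩
  · intro u v hadj hcc
    have huv : u = v := (Fintype.equivFinOfCardEq hcV).injective hcc
    subst huv
    rcases hadj with h | ⟨-, h⟩
    · exact one_ne_zero (add_left_cancel (show u.1 + 1 = u.1 + 0 by rw [add_zero]; exact h.symm))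
    · exact one_ne_zero (add_left_cancel (show u.2 + 1 = u.2 + 0 by rw [add_zero]; exact h.symm))
  · intro u v u' v' _ _ h1 h2 _
    exact ⟨(Fintype.equivFinOfCardEq hcV).injective h1,
      (Fintype.equivFinOfCardEq hcV).injective h2⟩

private lemma stmt11_arith (n t k x N : ℕ) (hn : 3 ≤ n) (ht1 : 1 ≤ t) (ht2 : t < n)
    (hN : N = n * n) (h1 : x * (n + 1) + 1 ≤ k) (h2 : (N - n - t) * n ≤ k * x)
    (hcon : k + 1 ≤ N) : False := by
  have h3n : 3 * n ≤ N := by nlinarith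
  obtain ⟨M, hMeq⟩ : ∃ M, M + n + t = N := ⟨N - n - t, by omega⟩
  have hM : N - n - t = M := by omega
  rw [hM] at h2
  have hx : x + 2 ≤ n := by nlinarith
  nlinarith

/-- for `n ≥ 3` and `1 ≤ t < n`, `h(C⃗_{n²−n−t}[C⃗_n]) ≥ n²`. -/
theorem stmt11 (n t : ℕ) (hn : 3 ≤ n) (ht1 : 1 ≤ t) (ht2 : t < n) :
    n ^ 2 ≤ (lexProd (dirCycle (n ^ 2 - n - t)) (dirCycle n)).harmoniousNumber := by
  have hnn : n ^ 2 = n * n := sq n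
  have h3n : 3 * n ≤ n * n := Nat.mul_le_mul_right n hn
  have hm2 : 2 ≤ n ^ 2 - n - t := by omega
  have hS := stmt11_exists_harm (n ^ 2 - n - t) n hm2 (by omega)
  rw [Digraph.harmoniousNumber]
  obtain ⟨c, hc⟩ := Nat.sInf_mem hS
  obtain ⟨x, h1, h2⟩ := stmt11_key (n ^ 2 - n - t) n _ hm2 hn c hc
  by_contra hcon
  push_neg at hcon
  exact stmt11_arith n t _ x (n ^ 2) hn ht1 ht2 hnn h1 h2 (by omega)
end

section
/- For every n ≥ 2 and every positive integer i, the dichromatic number of the i-fold iterated lexicographic product [C⃗_n]^i of the directed cycle on n vertices with itself equals T_n(i), where T_n(0) = 1 and T_n(i) = ⌈(n/(n−1))·T_n(i−1)⌉. -/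
/-- The Josephus-type recurrence `T n 0 = 1`, `T n (i+1) = ⌈(n/(n−1)) · T n i⌉`. -/
def T (n : ℕ) : ℕ → ℕ
  | 0 => 1
  | i + 1 => ⌈(n : ℚ) / ((n : ℚ) - 1) * (T n i : ℚ)⌉₊


section Stmt18Aux

section arith

/-- ceiling characterization -/
lemma fchar {n : ℕ} (hn : 2 ≤ n) (b m : ℕ) :
    (⌈(n : ℚ) / ((n:ℚ) - 1) * b⌉₊ ≤ m) ↔ n * b ≤ m * (n - 1) := by
  have h1 : (0:ℚ) < (n:ℚ) - 1 := by
    have : (2:ℚ) ≤ (n:ℚ) := by exact_mod_cast hn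
    linarith
  have hc : ((n-1:ℕ):ℚ) = (n:ℚ)-1 := by
    have := Nat.cast_sub (show 1 ≤ n by omega) (R := ℚ)
    simpa using this
  rw [Nat.ceil_le, div_mul_eq_mul_div, div_le_iff₀ h1, ← hc]
  norm_cast

lemma fself {n : ℕ} (hn : 2 ≤ n) (b : ℕ) :
    n * b ≤ (⌈(n : ℚ) / ((n:ℚ) - 1) * b⌉₊) * (n - 1) :=
  (fchar hn b _).mp le_rfl

lemma blt_f {n : ℕ} (hn : 2 ≤ n) {b : ℕ} (hb : 1 ≤ b) :
    b < ⌈(n : ℚ) / ((n:ℚ) - 1) * b⌉₊ := by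
  by_contra h
  push_neg at h
  have h2 := fself hn b
  have h3 : (⌈(n : ℚ) / ((n:ℚ) - 1) * b⌉₊) * (n - 1) ≤ b * (n-1) :=
    Nat.mul_le_mul_right _ h
  obtain ⟨n', rfl⟩ : ∃ n', n = n' + 2 := ⟨n - 2, by omega⟩
  have : (n' + 2) * b ≤ b * (n' + 1) := le_trans h2 (by simpa using h3)
  nlinarith

lemma count_lemma {n b m s : ℕ} (hn : 2 ≤ n) (hm : n * b ≤ m * (n - 1)) (hs : s < m) :
    ∃ x : ℕ, x < n ∧ ∀ t, t < b → (x * b + t) % m ≠ s := by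
  by_contra hcon
  push_neg at hcon
  have hb : 1 ≤ b := by
    by_contra hb
    push_neg at hb
    obtain ⟨t, ht, _⟩ := hcon 0 (by omega)
    omega
  have hm0 : 0 < m := by omega
  choose t ht hmod using hcon
  have hq : ∀ (x : ℕ) (hx : x < n), (x * b + t x hx) / m < n - 1 := by
    intro x hx
    have hjl : x * b + t x hx < n * b := by
      have : x * b + b ≤ n * b := by
        have := Nat.mul_le_mul_right b (show x + 1 ≤ n by omega)
        linarith [this]
      have := ht x hx
      omega
    have : x * b + t x hx < m * (n-1) := lt_of_lt_of_le hjl hm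
    exact Nat.div_lt_of_lt_mul (by linarith [this, Nat.mul_comm m (n-1)])
  let f : Fin n → Fin (n-1) := fun x => ⟨(x.1 * b + t x.1 x.2) / m, hq x.1 x.2⟩
  have hinj : Function.Injective f := by
    intro x y hxy
    have he : (x.1 * b + t x.1 x.2) / m = (y.1 * b + t y.1 y.2) / m := by
      simpa [f, Fin.ext_iff] using hxy
    have hx := Nat.div_add_mod (x.1 * b + t x.1 x.2) m
    have hy := Nat.div_add_mod (y.1 * b + t y.1 y.2) m
    rw [hmod x.1 x.2] at hx
    rw [hmod y.1 y.2, ← he] at hy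
    have hj : x.1 * b + t x.1 x.2 = y.1 * b + t y.1 y.2 := by omega
    have hx1 : (x.1 * b + t x.1 x.2) / b = x.1 := by
      rw [Nat.add_comm, Nat.add_mul_div_right _ _ (show 0 < b by omega),
        Nat.div_eq_of_lt (ht x.1 x.2), Nat.zero_add]
    have hy1 : (y.1 * b + t y.1 y.2) / b = y.1 := by
      rw [Nat.add_comm, Nat.add_mul_div_right _ _ (show 0 < b by omega),
        Nat.div_eq_of_lt (ht y.1 y.2), Nat.zero_add]
    apply Fin.ext
    rw [← hx1, ← hy1, hj]
  have := Fintype.card_le_of_injective f hinj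
  simp at this
  omega

lemma block_inj {m b : ℕ} (hbm : b ≤ m) (a : ℕ) :
    ∀ t₁ t₂, t₁ < b → t₂ < b → (a + t₁) % m = (a + t₂) % m → t₁ = t₂ := by
  have key : ∀ t₁ t₂, t₁ ≤ t₂ → t₂ < b → (a + t₁) % m = (a + t₂) % m → t₁ = t₂ := by
    intro t₁ t₂ hle h2 he
    have hmod : (a + t₁) ≡ (a + t₂) [MOD m] := he
    have hd := (Nat.modEq_iff_dvd' (by omega)).mp hmod
    have : (a + t₂) - (a + t₁) = t₂ - t₁ := by omega
    rw [this] at hd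
    have := Nat.eq_zero_of_dvd_of_lt hd
    omega
  intro t₁ t₂ h1 h2 he
  rcases le_total t₁ t₂ with h | h
  · exact key t₁ t₂ h h2 he
  · exact (key t₂ t₁ h h1 he.symm).symm

end arith

open Relation

def Hb {V : Type*} (D : Digraph V) (b k : ℕ) : Prop :=
  ∃ φ : V → Finset (Fin k), (∀ v, b ≤ (φ v).card) ∧
    ∀ j : Fin k, D.AcyclicOn {v | j ∈ φ v}

lemma acyclicOn_mono {V : Type*} {D : Digraph V} {S S' : Set V} (h : S' ⊆ S)
    (hS : D.AcyclicOn S) : D.AcyclicOn S' := by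
  rintro ⟨v, hv⟩
  exact hS ⟨v, Relation.TransGen.mono (fun a b ⟨ha, hb, hd⟩ => ⟨h ha, h hb, hd⟩) _ _ hv⟩

lemma dichrom_eq_sInf_Hb {V : Type*} (D : Digraph V) :
    D.dichromaticNumber = sInf {k | Hb D 1 k} := by
  unfold Digraph.dichromaticNumber
  congr 1
  ext k
  constructor
  · rintro ⟨c, hc⟩
    refine ⟨fun v => {c v}, fun v => by simp, fun j => ?_⟩
    have := hc j
    apply acyclicOn_mono ?_ this
    intro v hv
    simp only [Set.mem_setOf_eq, Finset.mem_singleton] at hv ⊢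
    exact hv.symm
  · rintro ⟨φ, hcard, hac⟩
    refine ⟨fun v => (φ v).min' (Finset.card_pos.mp (hcard v)), fun j => ?_⟩
    apply acyclicOn_mono ?_ (hac j)
    intro v hv
    simp only [Set.mem_setOf_eq] at hv ⊢
    rw [← hv]
    exact Finset.min'_mem _ _

lemma dirCycle_trans_reach {n : ℕ} (hn : 2 ≤ n) (Tset : Set (ZMod n)) {v : ZMod n}
    (h : Relation.TransGen (fun a b => a ∈ Tset ∧ b ∈ Tset ∧ (dirCycle n).Adj a b) v v) :
    ∀ u, u ∈ Tset := by
  haveI : NeZero n := ⟨by omega⟩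
  have key : ∀ c, Relation.TransGen
      (fun a b => a ∈ Tset ∧ b ∈ Tset ∧ (dirCycle n).Adj a b) v c →
      ∃ m : ℕ, 1 ≤ m ∧ c = v + (m : ZMod n) ∧
        ∀ t : ℕ, 1 ≤ t → t ≤ m → v + (t : ZMod n) ∈ Tset := by
    intro c hc
    induction hc with
    | single h1 =>
      refine ⟨1, le_rfl, by simpa [dirCycle] using h1.2.2, ?_⟩
      intro t h1t ht1
      have : t = 1 := by omega
      subst this
      have hc1 : _ = v + 1 := h1.2.2
      rw [show ((1:ℕ) : ZMod n) = 1 by push_cast; rfl, ← hc1]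
      exact h1.2.1
    | tail hab hbc ih =>
      obtain ⟨m, hm1, hbm, hmem⟩ := ih
      refine ⟨m + 1, by omega, ?_, ?_⟩
      · have hstep := hbc.2.2
        simp only [dirCycle] at hstep
        rw [hstep, hbm]
        push_cast
        ring
      · intro t h1t htm
        rcases Nat.lt_or_ge t (m + 1) with hlt | hge
        · exact hmem t h1t (by omega)
        · have : t = m + 1 := by omega
          subst this
          have hc1 := hbc.2.2
          simp only [dirCycle] at hc1
          have hc := hbc.2.1
          rw [hc1, hbm] at hc
          have heq : v + ((m + 1 : ℕ) : ZMod n) = v + (m : ZMod n) + 1 := by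
            push_cast; ring
          rw [heq]
          exact hc
  obtain ⟨m, hm1, hvm, hmem⟩ := key v h
  have hdvd : n ∣ m := by
    have : ((m : ℕ) : ZMod n) = 0 := by
      have := hvm
      have h0 : v + (m : ZMod n) = v + 0 := by rw [add_zero, ← this]
      exact add_left_cancel h0
    exact (ZMod.natCast_eq_zero_iff m n).mp this
  have hnm : n ≤ m := Nat.le_of_dvd (by omega) hdvd
  intro u
  by_cases hu : u = v
  · subst hu
    have := hmem n (by omega) hnm
    simpa [ZMod.natCast_self] using this
  · have hval : 1 ≤ (u - v).val := by
      have hne : u - v ≠ 0 := fun hc => hu (by rwa [sub_eq_zero] at hc)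
      have : (u - v).val ≠ 0 := fun h => hne ((ZMod.val_eq_zero _).mp h)
      omega
    have hlt : (u - v).val < n := ZMod.val_lt _
    have := hmem (u - v).val hval (by omega)
    have hcast : ((((u - v).val : ℕ)) : ZMod n) = u - v := ZMod.natCast_rightInverse _
    rw [hcast] at this
    simpa using this

lemma transGen_of_full {n : ℕ} (hn : 2 ≤ n) {W : Type*} (D : Digraph W)
    (S : Set (W × ZMod n)) (v : W) (hfull : ∀ x : ZMod n, (v, x) ∈ S) :
    ∃ z, Relation.TransGen
      (fun a b => a ∈ S ∧ b ∈ S ∧ (lexProd D (dirCycle n)).Adj a b) z z := by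
  haveI : NeZero n := ⟨by omega⟩
  refine ⟨(v, 0), ?_⟩
  have step : ∀ x : ZMod n,
      (fun a b => a ∈ S ∧ b ∈ S ∧ (lexProd D (dirCycle n)).Adj a b) (v, x) (v, x + 1) := by
    intro x
    exact ⟨hfull x, hfull (x + 1), Or.inr ⟨rfl, rfl⟩⟩
  have key : ∀ m : ℕ, 1 ≤ m → Relation.TransGen
      (fun a b => a ∈ S ∧ b ∈ S ∧ (lexProd D (dirCycle n)).Adj a b)
      (v, (0 : ZMod n)) (v, (m : ZMod n)) := by
    intro m hm
    induction m with
    | zero => omega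
    | succ m ih =>
      rcases Nat.eq_or_lt_of_le hm with h | h
      · rw [← h]
        exact Relation.TransGen.single (by simpa using step 0)
      · have h1 : 1 ≤ m := by omega
        have := (ih h1).tail (step (m : ZMod n))
        simpa [Nat.cast_add, Nat.cast_one] using this
  have := key n (by omega)
  simpa [ZMod.natCast_self] using this

lemma proj_lemma {W : Type*} {n : ℕ} {D : Digraph W} {S : Set (W × ZMod n)}
    {a c : W × ZMod n}
    (h : Relation.TransGen
      (fun a b => a ∈ S ∧ b ∈ S ∧ (lexProd D (dirCycle n)).Adj a b) a c) :
    Relation.TransGen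
        (fun u w => (∃ x, (u, x) ∈ S) ∧ (∃ x, (w, x) ∈ S) ∧ D.Adj u w) a.1 c.1 ∨
      (a.1 = c.1 ∧ Relation.TransGen
        (fun x y => (a.1, x) ∈ S ∧ (a.1, y) ∈ S ∧ (dirCycle n).Adj x y) a.2 c.2) := by
  induction h with
  | single h1 =>
    rcases h1.2.2 with hD | ⟨heq, hF⟩
    · exact Or.inl (Relation.TransGen.single ⟨⟨a.2, by simpa using h1.1⟩,
        ⟨_, by simpa using h1.2.1⟩, hD⟩)
    · refine Or.inr ⟨heq, Relation.TransGen.single ⟨by simpa using h1.1, ?_, hF⟩⟩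
      rw [heq]
      simpa using h1.2.1
  | tail hab hbc ih =>
    rename_i b c'
    rcases hbc.2.2 with hD | ⟨heq, hF⟩
    · -- real D-arc from b to c'
      have harc : (fun u w => (∃ x, (u, x) ∈ S) ∧ (∃ x, (w, x) ∈ S) ∧ D.Adj u w) b.1 c'.1 :=
        ⟨⟨b.2, by simpa using hbc.1⟩, ⟨c'.2, by simpa using hbc.2.1⟩, hD⟩
      rcases ih with L | ⟨haeq, F⟩
      · exact Or.inl (L.tail harc)
      · exact Or.inl (haeq ▸ Relation.TransGen.single harc)
    · -- fiber step, b.1 = c'.1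
      rcases ih with L | ⟨haeq, F⟩
      · exact Or.inl (heq ▸ L)
      · refine Or.inr ⟨haeq.trans heq, F.tail ⟨?_, ?_, hF⟩⟩
        · rw [haeq]; simpa using hbc.1
        · rw [haeq.trans heq]; simpa using hbc.2.1

lemma hb_extract {W : Type*} {n b k : ℕ} (hn : 2 ≤ n) (hb : 1 ≤ b) {D : Digraph W}
    (h : Hb (lexProd D (dirCycle n)) b k) :
    Hb D (⌈(n : ℚ) / ((n:ℚ) - 1) * b⌉₊) k := by
  haveI : NeZero n := ⟨by omega⟩
  obtain ⟨φ, hcard, hac⟩ := h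
  set m := ⌈(n : ℚ) / ((n:ℚ) - 1) * (b:ℚ)⌉₊ with hmdef
  refine ⟨fun v => Finset.univ.biUnion (fun x : ZMod n => φ (v, x)), ?_, ?_⟩
  · intro v
    have slice_bound : ∀ j : Fin k,
        (Finset.univ.filter (fun x : ZMod n => j ∈ φ (v, x))).card ≤ n - 1 := by
      intro j
      have hnotfull : ¬ ∀ x : ZMod n, j ∈ φ (v, x) := by
        intro hfull
        exact hac j (transGen_of_full hn D {p | j ∈ φ p} v (fun x => hfull x))
      push_neg at hnotfull
      obtain ⟨x0, hx0⟩ := hnotfull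
      calc (Finset.univ.filter (fun x : ZMod n => j ∈ φ (v, x))).card
          ≤ (Finset.univ.erase x0).card := Finset.card_le_card (by
            intro x hx
            simp only [Finset.mem_filter] at hx
            exact Finset.mem_erase.mpr ⟨fun hc => hx0 (hc ▸ hx.2), Finset.mem_univ _⟩)
        _ = n - 1 := by
            rw [Finset.card_erase_of_mem (Finset.mem_univ _)]
            simp [ZMod.card]
    have hsum1 : n * b ≤ ∑ x : ZMod n, (φ (v, x)).card := by
      calc n * b = ∑ _x : ZMod n, b := by simp [ZMod.card, mul_comm]
        _ ≤ _ := Finset.sum_le_sum (fun x _ => hcard (v, x))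
    have hsum2 : ∑ x : ZMod n, (φ (v, x)).card
        = ∑ j : Fin k, (Finset.univ.filter (fun x : ZMod n => j ∈ φ (v, x))).card := by
      simp only [Finset.card_filter]
      rw [Finset.sum_comm]
      congr 1
      ext x
      rw [← Finset.card_filter, Finset.filter_univ_mem]
    set B := Finset.univ.biUnion (fun x : ZMod n => φ (v, x)) with hB
    have hsum3 : ∑ j : Fin k, (Finset.univ.filter (fun x : ZMod n => j ∈ φ (v, x))).card
        ≤ B.card * (n - 1) := by
      calc ∑ j : Fin k, (Finset.univ.filter (fun x : ZMod n => j ∈ φ (v, x))).card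
          ≤ ∑ j : Fin k, (if j ∈ B then n - 1 else 0) := by
            apply Finset.sum_le_sum
            intro j _
            by_cases hj : j ∈ B
            · simpa [hj] using slice_bound j
            · simp only [hj, if_false, Nat.le_zero, Finset.card_eq_zero]
              apply Finset.filter_eq_empty_iff.mpr
              intro x _
              intro hc
              exact hj (Finset.mem_biUnion.mpr ⟨x, Finset.mem_univ _, hc⟩)
        _ = B.card * (n - 1) := by
            rw [Finset.sum_ite_mem, Finset.univ_inter, Finset.sum_const, smul_eq_mul]
    have : n * b ≤ B.card * (n - 1) := le_trans hsum1 (hsum2 ▸ hsum3)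
    exact (fchar hn b B.card).mpr this
  · intro j
    rintro ⟨v, hv⟩
    classical
    let rep : W → ZMod n := fun u => if h : ∃ x : ZMod n, j ∈ φ (u, x) then h.choose else 0
    apply hac j
    refine ⟨(v, rep v), Relation.TransGen.lift (f := fun u => (u, rep u))
      (p := fun a b => a ∈ {p : W × ZMod n | j ∈ φ p} ∧ b ∈ {p : W × ZMod n | j ∈ φ p} ∧
        (lexProd D (dirCycle n)).Adj a b) ?_ _ _ hv⟩
    rintro a b' ⟨ha, hb', hd⟩
    simp only [Set.mem_setOf_eq, Finset.mem_biUnion, Finset.mem_univ, true_and] at ha hb'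
    refine ⟨?_, ?_, Or.inl hd⟩
    · simp only [Set.mem_setOf_eq, rep, dif_pos ha]
      exact ha.choose_spec
    · simp only [Set.mem_setOf_eq, rep, dif_pos hb']
      exact hb'.choose_spec

lemma hb_construct {W : Type*} {n b k : ℕ} (hn : 2 ≤ n) (hb : 1 ≤ b) {D : Digraph W}
    (h : Hb D (⌈(n : ℚ) / ((n:ℚ) - 1) * b⌉₊) k) :
    Hb (lexProd D (dirCycle n)) b k := by
  classical
  haveI : NeZero n := ⟨by omega⟩
  set m := ⌈(n : ℚ) / ((n:ℚ) - 1) * (b:ℚ)⌉₊ with hmdef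
  have hbm : b < m := blt_f hn hb
  have hm0 : 0 < m := by omega
  have hmn : n * b ≤ m * (n - 1) := fself hn b
  obtain ⟨ψ, hcard, hac⟩ := h
  have hsub : ∀ v : W, ∃ t ⊆ ψ v, t.card = m := fun v =>
    Finset.exists_subset_card_eq (hcard v)
  choose ψ' hψ'sub hψ'card using hsub
  set φ : W × ZMod n → Finset (Fin k) := fun p => Finset.image (fun t : Fin b =>
      (ψ' p.1).orderEmbOfFin (hψ'card p.1)
        ⟨((p.2).val * b + t) % m, Nat.mod_lt _ hm0⟩) Finset.univ with hφ
  have hmem_ψ : ∀ (p : W × ZMod n) (j : Fin k), j ∈ φ p → j ∈ ψ p.1 := by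
    intro p j hj
    simp only [hφ, Finset.mem_image] at hj
    obtain ⟨t, _, rfl⟩ := hj
    exact hψ'sub p.1 (Finset.orderEmbOfFin_mem _ _ _)
  refine ⟨φ, ?_, ?_⟩
  · intro p
    rw [hφ]
    rw [Finset.card_image_of_injective _ ?_]
    · simp
    · intro t₁ t₂ hteq
      have := (ψ' p.1).orderEmbOfFin (hψ'card p.1) |>.injective hteq
      have hval : ((p.2).val * b + t₁) % m = ((p.2).val * b + t₂) % m := by
        simpa [Fin.ext_iff] using this
      exact Fin.ext (block_inj (le_of_lt hbm) _ t₁ t₂ t₁.2 t₂.2 hval)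
  · intro j
    rintro ⟨z, hz⟩
    rcases proj_lemma hz with L | ⟨heq, F⟩
    · apply hac j
      refine ⟨z.1, Relation.TransGen.mono ?_ _ _ L⟩
      rintro u w ⟨⟨xu, hu⟩, ⟨xw, hw⟩, hd⟩
      exact ⟨hmem_ψ (u, xu) j hu, hmem_ψ (w, xw) j hw, hd⟩
    · set v := z.1 with hv
      have hreach := dirCycle_trans_reach hn {x : ZMod n | (v, x) ∈ {p | j ∈ φ p}} F
      have h0 : j ∈ φ (v, 0) := hreach 0
      have hj' : j ∈ ψ' v := by
        simp only [hφ, Finset.mem_image] at h0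
        obtain ⟨t, _, rfl⟩ := h0
        exact Finset.orderEmbOfFin_mem _ _ _
      have hrange : ∃ s : Fin m, (ψ' v).orderEmbOfFin (hψ'card v) s = j := by
        have := Finset.range_orderEmbOfFin (ψ' v) (hψ'card v)
        have : j ∈ Set.range ((ψ' v).orderEmbOfFin (hψ'card v)) := by
          rw [this]; exact_mod_cast hj'
        exact this
      obtain ⟨s, hs⟩ := hrange
      obtain ⟨x0, hx0n, hx0⟩ := count_lemma hn hmn s.2
      have hx0mem := hreach (x0 : ZMod n)
      simp only [Set.mem_setOf_eq, hφ, Finset.mem_image] at hx0mem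
      obtain ⟨t, _, ht⟩ := hx0mem
      rw [← hs] at ht
      have hidx : ((((x0 : ZMod n)).val * b + t) % m) = s.1 := by
        have := ((ψ' v).orderEmbOfFin (hψ'card v)).injective ht
        simpa [Fin.ext_iff] using this
      rw [ZMod.val_cast_of_lt hx0n] at hidx
      exact hx0 t t.2 hidx

lemma dirCycle_full_cycle {n : ℕ} (hn : 2 ≤ n) (Tset : Set (ZMod n))
    (hfull : ∀ x : ZMod n, x ∈ Tset) :
    ∃ z, Relation.TransGen (fun a b => a ∈ Tset ∧ b ∈ Tset ∧ (dirCycle n).Adj a b) z z := by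
  haveI : NeZero n := ⟨by omega⟩
  refine ⟨0, ?_⟩
  have step : ∀ x : ZMod n,
      (fun a b => a ∈ Tset ∧ b ∈ Tset ∧ (dirCycle n).Adj a b) x (x + 1) :=
    fun x => ⟨hfull x, hfull (x + 1), rfl⟩
  have key : ∀ m : ℕ, 1 ≤ m → Relation.TransGen
      (fun a b => a ∈ Tset ∧ b ∈ Tset ∧ (dirCycle n).Adj a b) (0 : ZMod n) (m : ZMod n) := by
    intro m hm
    induction m with
    | zero => omega
    | succ m ih =>
      rcases Nat.eq_or_lt_of_le hm with h | h
      · rw [← h]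
        exact Relation.TransGen.single (by simpa using step 0)
      · have := (ih (by omega)).tail (step (m : ZMod n))
        simpa [Nat.cast_add, Nat.cast_one] using this
  have := key n (by omega)
  simpa [ZMod.natCast_self] using this

lemma hb_dirCycle {n b k : ℕ} (hn : 2 ≤ n) (hb : 1 ≤ b) :
    Hb (dirCycle n) b k ↔ ⌈(n : ℚ) / ((n:ℚ) - 1) * b⌉₊ ≤ k := by
  classical
  haveI : NeZero n := ⟨by omega⟩
  set m := ⌈(n : ℚ) / ((n:ℚ) - 1) * (b:ℚ)⌉₊ with hmdef
  have hbm : b < m := blt_f hn hb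
  have hm0 : 0 < m := by omega
  have hmn : n * b ≤ m * (n - 1) := fself hn b
  constructor
  · rintro ⟨φ, hcard, hac⟩
    have slice_bound : ∀ j : Fin k,
        (Finset.univ.filter (fun x : ZMod n => j ∈ φ x)).card ≤ n - 1 := by
      intro j
      have hnotfull : ¬ ∀ x : ZMod n, j ∈ φ x := by
        intro hfull
        exact hac j (dirCycle_full_cycle hn {x | j ∈ φ x} hfull)
      push_neg at hnotfull
      obtain ⟨x0, hx0⟩ := hnotfull
      calc (Finset.univ.filter (fun x : ZMod n => j ∈ φ x)).card
          ≤ (Finset.univ.erase x0).card := Finset.card_le_card (by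
            intro x hx
            simp only [Finset.mem_filter] at hx
            exact Finset.mem_erase.mpr ⟨fun hc => hx0 (hc ▸ hx.2), Finset.mem_univ _⟩)
        _ = n - 1 := by
            rw [Finset.card_erase_of_mem (Finset.mem_univ _)]
            simp [ZMod.card]
    have hsum1 : n * b ≤ ∑ x : ZMod n, (φ x).card := by
      calc n * b = ∑ _x : ZMod n, b := by simp [ZMod.card, mul_comm]
        _ ≤ _ := Finset.sum_le_sum (fun x _ => hcard x)
    have hsum2 : ∑ x : ZMod n, (φ x).card
        = ∑ j : Fin k, (Finset.univ.filter (fun x : ZMod n => j ∈ φ x)).card := by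
      simp only [Finset.card_filter]
      rw [Finset.sum_comm]
      congr 1
      ext x
      rw [← Finset.card_filter, Finset.filter_univ_mem]
    have hsum3 : ∑ j : Fin k, (Finset.univ.filter (fun x : ZMod n => j ∈ φ x)).card
        ≤ k * (n - 1) := by
      calc ∑ j : Fin k, (Finset.univ.filter (fun x : ZMod n => j ∈ φ x)).card
          ≤ ∑ _j : Fin k, (n - 1) := Finset.sum_le_sum (fun j _ => slice_bound j)
        _ = k * (n - 1) := by simp [mul_comm]
    exact (fchar hn b k).mpr (le_trans hsum1 (hsum2 ▸ hsum3))
  · intro hk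
    refine ⟨fun x => Finset.image (fun t : Fin b =>
        (⟨(x.val * b + t) % m, lt_of_lt_of_le (Nat.mod_lt _ hm0) hk⟩ : Fin k))
        Finset.univ, ?_, ?_⟩
    · intro x
      rw [Finset.card_image_of_injective _ ?_]
      · simp
      · intro t₁ t₂ hteq
        have hval : (x.val * b + t₁) % m = (x.val * b + t₂) % m := by
          simpa [Fin.ext_iff] using hteq
        exact Fin.ext (block_inj (le_of_lt hbm) _ t₁ t₂ t₁.2 t₂.2 hval)
    · intro j
      rintro ⟨x, hx⟩
      have hreach := dirCycle_trans_reach hn _ hx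
      have hjm : j.1 < m := by
        have h0 := hreach 0
        simp only [Set.mem_setOf_eq, Finset.mem_image] at h0
        obtain ⟨t, _, ht⟩ := h0
        have : ((0 : ZMod n).val * b + t) % m = j.1 := by
          simpa [Fin.ext_iff] using ht
        rw [← this]
        exact Nat.mod_lt _ hm0
      obtain ⟨x0, hx0n, hx0⟩ := count_lemma hn hmn hjm
      have hx0mem := hreach (x0 : ZMod n)
      simp only [Set.mem_setOf_eq, Finset.mem_image] at hx0mem
      obtain ⟨t, _, ht⟩ := hx0mem
      have hidx : ((x0 : ZMod n).val * b + t) % m = j.1 := by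
        simpa [Fin.ext_iff] using ht
      rw [ZMod.val_cast_of_lt hx0n] at hidx
      exact hx0 t t.2 hidx

lemma hb_iter {n : ℕ} (hn : 2 ≤ n) : ∀ (i b k : ℕ), 1 ≤ b →
    (Hb (iterLex (dirCycle n) (dirCycle n) i) b k ↔
      (fun b : ℕ => ⌈(n : ℚ) / ((n:ℚ) - 1) * b⌉₊)^[i + 1] b ≤ k) := by
  intro i
  induction i with
  | zero =>
    intro b k hb
    rw [Function.iterate_one]
    exact hb_dirCycle hn hb
  | succ i ih =>
    intro b k hb
    have hfb : 1 ≤ ⌈(n : ℚ) / ((n:ℚ) - 1) * b⌉₊ := le_of_lt (lt_of_le_of_lt hb (blt_f hn hb))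
    constructor
    · intro h
      have := hb_extract hn hb (D := iterLex (dirCycle n) (dirCycle n) i) h
      have := (ih _ k hfb).mp this
      rwa [← Function.iterate_succ_apply] at this
    · intro h
      apply hb_construct hn hb (D := iterLex (dirCycle n) (dirCycle n) i)
      apply (ih _ k hfb).mpr
      rwa [Function.iterate_succ_apply] at h

lemma T_eq_iter {n : ℕ} : ∀ i : ℕ,
    T n i = (fun b : ℕ => ⌈(n : ℚ) / ((n:ℚ) - 1) * b⌉₊)^[i] 1 := by
  intro i
  induction i with
  | zero => rfl
  | succ i ih =>
    rw [Function.iterate_succ_apply', ← ih]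
    rfl


end Stmt18Aux

/-- for `n ≥ 2` and `i ≥ 1`, the dichromatic number of the `i`-fold
iterated lexicographic product `[C⃗_n]^i` (the product of `i` copies of `C⃗_n`)
equals `T n i`. -/
theorem stmt18 (n : ℕ) (hn : 2 ≤ n) (i : ℕ) (hi : 1 ≤ i) :
    (iterLex (dirCycle n) (dirCycle n) (i - 1)).dichromaticNumber = T n i := by
  obtain ⟨i', rfl⟩ : ∃ i', i = i' + 1 := ⟨i - 1, by omega⟩
  rw [dichrom_eq_sInf_Hb]
  have hset : {k | Hb (iterLex (dirCycle n) (dirCycle n) (i' + 1 - 1)) 1 k}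
      = Set.Ici (T n (i' + 1)) := by
    ext k
    simp only [Set.mem_setOf_eq, Set.mem_Ici]
    rw [show i' + 1 - 1 = i' by omega, hb_iter hn i' 1 k le_rfl, T_eq_iter]
  rw [hset, csInf_Ici]
end
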